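/- Let a ∈ (2, ∞), n ≥ 2 and ε > 0 satisfy 1 + ((2−a)/a²)·d^{2/a−2}·(1/ε)^{2/a} ≤ 0, where d > 0 is an upper bound for x_n. Then W(x) = ((x_n/ε)^{2/a} − |x'|²)^{1/2} satisfies F[W] ≤ 0 (i.e., W is a supersolution of the hyperbolic minimal graph equation) on the set {x : 0 < x_n ≤ d, (x_n/ε)^{2/a} > |x'|²}. -/

import Mathlib

/-- First partial derivative of `u` in the `i`-th coordinate direction. -/
noncomputable def pd {n : ℕ} (u : EuclideanSpace ℝ (Fin n) → ℝ) (i : Fin n)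
    (x : EuclideanSpace ℝ (Fin n)) : ℝ :=
  fderiv ℝ u x (EuclideanSpace.single i 1)

/-- Second partial derivative `u_{ij}`. -/
noncomputable def pd2 {n : ℕ} (u : EuclideanSpace ℝ (Fin n) → ℝ) (i j : Fin n)
    (x : EuclideanSpace ℝ (Fin n)) : ℝ :=
  fderiv ℝ (fun y => fderiv ℝ u y (EuclideanSpace.single j 1)) x (EuclideanSpace.single i 1)

/-- The hyperbolic minimal graph operator
`F[u] = Δu − Σ_{i,j} u_i u_j u_{ij}/(1+|∇u|²) + n/u`. -/
noncomputable def FHMG {n : ℕ} (u : EuclideanSpace ℝ (Fin n) → ℝ)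
    (x : EuclideanSpace ℝ (Fin n)) : ℝ :=
  (∑ i, pd2 u i i x)
    - (∑ i, ∑ j, pd u i x * pd u j x * pd2 u i j x) / (1 + ∑ i, (pd u i x) ^ 2)
    + n / u x


open Real Finset

namespace HSGaux

noncomputable def g {n : ℕ} (N : Fin n) (b ε : ℝ) (y : EuclideanSpace ℝ (Fin n)) : ℝ :=
  (y N / ε) ^ b - ∑ i ∈ Finset.univ.erase N, y i ^ 2

noncomputable def D {n : ℕ} (N : Fin n) (b ε : ℝ) (y : EuclideanSpace ℝ (Fin n)) :
    EuclideanSpace ℝ (Fin n) →L[ℝ] ℝ :=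
  (b * (y N / ε) ^ (b - 1) / ε) • EuclideanSpace.proj N
    - ∑ i ∈ Finset.univ.erase N, (2 * y i) • EuclideanSpace.proj i

lemma hasFDerivAt_coord {n : ℕ} (i : Fin n) (y : EuclideanSpace ℝ (Fin n)) :
    HasFDerivAt (fun z : EuclideanSpace ℝ (Fin n) => z i)
      (EuclideanSpace.proj (𝕜 := ℝ) i) y :=
  (EuclideanSpace.proj (𝕜 := ℝ) i).hasFDerivAt

lemma hasFDerivAt_coord_div {n : ℕ} (N : Fin n) (ε : ℝ) (y : EuclideanSpace ℝ (Fin n)) :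
    HasFDerivAt (fun z : EuclideanSpace ℝ (Fin n) => z N / ε)
      (ε⁻¹ • EuclideanSpace.proj (𝕜 := ℝ) N) y := by
  simpa [div_eq_inv_mul] using (hasFDerivAt_coord N y).const_mul ε⁻¹

lemma hasFDerivAt_pow_coord {n : ℕ} (N : Fin n) (ε c : ℝ) (y : EuclideanSpace ℝ (Fin n))
    (hy : y N / ε ≠ 0) :
    HasFDerivAt (fun z : EuclideanSpace ℝ (Fin n) => (z N / ε) ^ c)
      ((c * (y N / ε) ^ (c - 1) / ε) • EuclideanSpace.proj (𝕜 := ℝ) N) y := by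
  have h := (Real.hasDerivAt_rpow_const (x := y N / ε) (p := c)
      (Or.inl hy)).comp_hasFDerivAt y (hasFDerivAt_coord_div N ε y)
  have he : (c * (y N / ε) ^ (c - 1) / ε) • EuclideanSpace.proj (𝕜 := ℝ) N
      = (c * (y N / ε) ^ (c - 1)) • (ε⁻¹ • EuclideanSpace.proj (𝕜 := ℝ) N) := by
    rw [div_eq_mul_inv, smul_smul]
  rw [he]; exact h

lemma hasFDerivAt_sq_sum {n : ℕ} (N : Fin n) (y : EuclideanSpace ℝ (Fin n)) :
    HasFDerivAt (fun z : EuclideanSpace ℝ (Fin n) => ∑ i ∈ Finset.univ.erase N, z i ^ 2)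
      (∑ i ∈ Finset.univ.erase N, (2 * y i) • EuclideanSpace.proj (𝕜 := ℝ) i) y := by
  apply HasFDerivAt.fun_sum
  intro i _
  have h := (hasDerivAt_pow 2 (y i)).comp_hasFDerivAt y (hasFDerivAt_coord i y)
  simpa [Function.comp_def] using h

lemma hasFDerivAt_g {n : ℕ} (N : Fin n) (b ε : ℝ) (y : EuclideanSpace ℝ (Fin n))
    (hy : y N / ε ≠ 0) :
    HasFDerivAt (g N b ε) (D N b ε y) y :=
  (hasFDerivAt_pow_coord N ε b y hy).sub (hasFDerivAt_sq_sum N y)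

lemma D_apply {n : ℕ} (N : Fin n) (b ε : ℝ) (y : EuclideanSpace ℝ (Fin n)) (j : Fin n) :
    D N b ε y (EuclideanSpace.single j 1)
      = if j = N then b * (y N / ε) ^ (b - 1) / ε else -(2 * y j) := by
  simp only [D, ContinuousLinearMap.sub_apply, ContinuousLinearMap.smul_apply,
    ContinuousLinearMap.sum_apply, PiLp.proj_apply, EuclideanSpace.single_apply,
    smul_eq_mul]
  rcases eq_or_ne j N with rfl | hj
  · rw [if_pos rfl, if_pos rfl, Finset.sum_eq_zero, mul_one, sub_zero]
    intro i hi
    rw [if_neg (Finset.mem_erase.mp hi).1, mul_zero]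
  · rw [if_neg hj, if_neg (fun h => hj h.symm), mul_zero, zero_sub]
    congr 1
    rw [Finset.sum_eq_single_of_mem j (Finset.mem_erase.mpr ⟨hj, Finset.mem_univ j⟩)]
    · rw [if_pos rfl, mul_one]
    · intro i _ hij
      rw [if_neg hij, mul_zero]

lemma hasFDerivAt_W {n : ℕ} (N : Fin n) (b ε : ℝ) (y : EuclideanSpace ℝ (Fin n))
    (hy : y N / ε ≠ 0) (hg : g N b ε y ≠ 0) :
    HasFDerivAt (fun z => Real.sqrt (g N b ε z))
      ((1 / (2 * Real.sqrt (g N b ε y))) • D N b ε y) y :=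
  (hasFDerivAt_g N b ε y hy).sqrt hg

end HSGaux

namespace HSGaux

lemma fderiv_c_off {n : ℕ} (N : Fin n) (b ε : ℝ) (x : EuclideanSpace ℝ (Fin n))
    (hy : x N / ε ≠ 0) (hg : 0 < g N b ε x) (i j : Fin n) :
    fderiv ℝ (fun y => -(2 * y j) * (2 * Real.sqrt (g N b ε y))⁻¹) x
        (EuclideanSpace.single i 1)
      = x j * (if i = N then b * (x N / ε) ^ (b - 1) / ε else -(2 * x i))
            / (2 * Real.sqrt (g N b ε x) ^ 3)
        - (if j = i then 1 else 0) / Real.sqrt (g N b ε x) := by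
  have hw : 0 < Real.sqrt (g N b ε x) := Real.sqrt_pos.mpr hg
  have h2w : (2 : ℝ) * Real.sqrt (g N b ε x) ≠ 0 := by positivity
  have hu : HasFDerivAt (fun y : EuclideanSpace ℝ (Fin n) => -(2 * y j))
      (-((2 : ℝ) • EuclideanSpace.proj (𝕜 := ℝ) j)) x :=
    ((hasFDerivAt_coord j x).const_mul 2).neg
  have hv := (hasDerivAt_inv h2w).comp_hasFDerivAt x
    ((hasFDerivAt_W N b ε x hy hg.ne').const_mul 2)
  simp only [Function.comp_def] at hv
  rw [(hu.fun_mul hv).fderiv]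
  simp only [ContinuousLinearMap.add_apply, ContinuousLinearMap.smul_apply, smul_eq_mul,
    ContinuousLinearMap.neg_apply, PiLp.proj_apply, EuclideanSpace.single_apply, D_apply]
  rcases eq_or_ne i N with rfl | hiN
  · rcases eq_or_ne j i with rfl | hji
    · simp only [if_pos rfl]
      field_simp
      ring
    · simp only [if_pos rfl, if_neg hji]
      field_simp
      ring
  · rcases eq_or_ne j i with rfl | hji
    · simp only [if_pos rfl, if_neg hiN]
      field_simp
      ring
    · simp only [if_pos rfl, if_neg hji, if_neg hiN]
      field_simp
      ring

lemma fderiv_c_N {n : ℕ} (N : Fin n) (b ε : ℝ) (x : EuclideanSpace ℝ (Fin n))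
    (hy : x N / ε ≠ 0) (hg : 0 < g N b ε x) (i : Fin n) :
    fderiv ℝ (fun y => b / ε * (y N / ε) ^ (b - 1) * (2 * Real.sqrt (g N b ε y))⁻¹) x
        (EuclideanSpace.single i 1)
      = -((b * (x N / ε) ^ (b - 1) / ε)
            * (if i = N then b * (x N / ε) ^ (b - 1) / ε else -(2 * x i)))
            / (4 * Real.sqrt (g N b ε x) ^ 3)
        + (if N = i then b * (b - 1) * (x N / ε) ^ (b - 2) / ε ^ 2 else 0)
            / (2 * Real.sqrt (g N b ε x)) := by
  have hw : 0 < Real.sqrt (g N b ε x) := Real.sqrt_pos.mpr hg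
  have h2w : (2 : ℝ) * Real.sqrt (g N b ε x) ≠ 0 := by positivity
  have hu0 := hasFDerivAt_pow_coord N ε (b - 1) x hy
  rw [show b - 1 - 1 = b - 2 by ring] at hu0
  have hu := hu0.const_mul (b / ε)
  have hv := (hasDerivAt_inv h2w).comp_hasFDerivAt x
    ((hasFDerivAt_W N b ε x hy hg.ne').const_mul 2)
  simp only [Function.comp_def] at hv
  rw [(hu.fun_mul hv).fderiv]
  simp only [ContinuousLinearMap.add_apply, ContinuousLinearMap.smul_apply, smul_eq_mul,
    PiLp.proj_apply, EuclideanSpace.single_apply, D_apply]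
  have hε0 : ε ≠ 0 := by rintro rfl; simp at hy
  rcases eq_or_ne i N with rfl | hiN
  · simp only [if_pos rfl, ↓reduceIte]
    field_simp
    ring
  · simp only [if_pos rfl, if_neg hiN, if_neg (Ne.symm hiN)]
    field_simp
    ring

end HSGaux

section Helpers

lemma HSGaux.sum_helper {n : ℕ} (N : Fin n) (x : EuclideanSpace ℝ (Fin n)) (f : Fin n → ℝ)
    (c1 c0 : ℝ) (h : ∀ i ∈ Finset.univ.erase N, f i = c1 * x i ^ 2 + c0) :
    ∑ i ∈ Finset.univ.erase N, f i
      = c1 * (∑ i ∈ Finset.univ.erase N, x i ^ 2) + ((Finset.univ.erase N).card : ℝ) * c0 := by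
  rw [Finset.sum_congr rfl h, Finset.sum_add_distrib, ← Finset.mul_sum, Finset.sum_const,
    nsmul_eq_mul]

lemma HSGaux.sum_helper_delta {n : ℕ} (N i : Fin n) (hi : i ∈ Finset.univ.erase N)
    (x : EuclideanSpace ℝ (Fin n)) (f : Fin n → ℝ) (c1 cδ : ℝ)
    (h : ∀ j ∈ Finset.univ.erase N, f j = c1 * x j ^ 2 + (if j = i then cδ else 0)) :
    ∑ j ∈ Finset.univ.erase N, f j = c1 * (∑ j ∈ Finset.univ.erase N, x j ^ 2) + cδ := by
  rw [Finset.sum_congr rfl h, Finset.sum_add_distrib, ← Finset.mul_sum,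
    Finset.sum_ite_eq' (Finset.univ.erase N) i (fun _ => cδ), if_pos hi]

end Helpers

set_option maxHeartbeats 2000000 in
theorem supersolution_a_gt_two
    {n : ℕ} (hn : 2 ≤ n) (a ε d : ℝ) (ha : 2 < a) (hε : 0 < ε) (hd : 0 < d)
    (hsmall : 1 + ((2 - a) / a ^ 2) * d ^ ((2 : ℝ) / a - 2) * (1 / ε) ^ ((2 : ℝ) / a) ≤ 0)
    (W : EuclideanSpace ℝ (Fin n) → ℝ)
    (hW : ∀ x : EuclideanSpace ℝ (Fin n),
      W x = Real.sqrt ((x ⟨n - 1, by omega⟩ / ε) ^ ((2 : ℝ) / a)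
        - ∑ i ∈ Finset.univ.erase (⟨n - 1, by omega⟩ : Fin n), (x i) ^ 2)) :
    ∀ x : EuclideanSpace ℝ (Fin n),
      0 < x ⟨n - 1, by omega⟩ → x ⟨n - 1, by omega⟩ ≤ d →
      (∑ i ∈ Finset.univ.erase (⟨n - 1, by omega⟩ : Fin n), (x i) ^ 2)
          < (x ⟨n - 1, by omega⟩ / ε) ^ ((2 : ℝ) / a) →
      FHMG W x ≤ 0 := by
  intro x ht0 htd hlt
  have ha0 : (0:ℝ) < a := by linarith
  set b : ℝ := 2 / a with hbdef
  have hb0 : 0 < b := by positivity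
  have hb1 : b < 1 := by rw [hbdef, div_lt_one ha0]; linarith
  set N : Fin n := (⟨n - 1, by omega⟩ : Fin n) with hNdef
  have hWeq : W = fun y => Real.sqrt (HSGaux.g N b ε y) := funext fun y => by rw [hW y]; rfl
  rw [hWeq]
  -- basic facts at the point x
  have ht : 0 < x N := ht0
  have htd' : x N ≤ d := htd
  have hgx : 0 < HSGaux.g N b ε x := by
    have h := sub_pos.mpr hlt
    exact h
  have hxε : x N / ε ≠ 0 := by positivity
  -- the open set and membership
  have hgc : Continuous (HSGaux.g N b ε) := by
    unfold HSGaux.g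
    apply Continuous.sub
    · exact (((EuclideanSpace.proj (𝕜 := ℝ) N).continuous).div_const ε).rpow_const
        (fun y => Or.inr hb0.le)
    · exact continuous_finset_sum _ (fun i _ => ((EuclideanSpace.proj (𝕜 := ℝ) i).continuous).pow 2)
  have hU : IsOpen {y : EuclideanSpace ℝ (Fin n) | 0 < y N ∧ 0 < HSGaux.g N b ε y} := by
    have h1 : IsOpen {y : EuclideanSpace ℝ (Fin n) | 0 < y N} :=
      isOpen_lt continuous_const (EuclideanSpace.proj (𝕜 := ℝ) N).continuous
    have h2 : IsOpen {y : EuclideanSpace ℝ (Fin n) | 0 < HSGaux.g N b ε y} :=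
      isOpen_lt continuous_const hgc
    exact h1.inter h2
  have hxU : x ∈ {y : EuclideanSpace ℝ (Fin n) | 0 < y N ∧ 0 < HSGaux.g N b ε y} := ⟨ht, hgx⟩
  -- first derivatives on the open set
  have hpd : ∀ y : EuclideanSpace ℝ (Fin n), 0 < y N → 0 < HSGaux.g N b ε y → ∀ j : Fin n,
      fderiv ℝ (fun z => Real.sqrt (HSGaux.g N b ε z)) y (EuclideanSpace.single j 1)
        = (if j = N then b * (y N / ε) ^ (b - 1) / ε else -(2 * y j))
            / (2 * Real.sqrt (HSGaux.g N b ε y)) := by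
    intro y hy hgy j
    have hyε : y N / ε ≠ 0 := by positivity
    rw [(HSGaux.hasFDerivAt_W N b ε y hyε hgy.ne').fderiv, ContinuousLinearMap.smul_apply,
      smul_eq_mul, HSGaux.D_apply, div_eq_mul_inv]
    ring
  -- first derivative values at x
  have hw0 : 0 < Real.sqrt (HSGaux.g N b ε x) := Real.sqrt_pos.mpr hgx
  have hpdN : pd (fun y => Real.sqrt (HSGaux.g N b ε y)) N x
      = (b * (x N / ε) ^ (b - 1) / ε) / (2 * Real.sqrt (HSGaux.g N b ε x)) := by
    simp only [pd]
    rw [hpd x ht hgx N, if_pos rfl]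
  have hpdoff : ∀ i : Fin n, i ≠ N → pd (fun y => Real.sqrt (HSGaux.g N b ε y)) i x
      = -(x i) / Real.sqrt (HSGaux.g N b ε x) := by
    intro i hi
    simp only [pd]
    rw [hpd x ht hgx i, if_neg hi]
    field_simp
  -- second derivatives at x, via local (eventual) equality of the first derivative
  have hev_off : ∀ j : Fin n, j ≠ N →
      (fun y => fderiv ℝ (fun z => Real.sqrt (HSGaux.g N b ε z)) y (EuclideanSpace.single j 1))
        =ᶠ[nhds x] (fun y => -(2 * y j) * (2 * Real.sqrt (HSGaux.g N b ε y))⁻¹) := by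
    intro j hj
    filter_upwards [hU.mem_nhds hxU] with y hy
    rw [hpd y hy.1 hy.2 j, if_neg hj, div_eq_mul_inv]
  have hev_N :
      (fun y => fderiv ℝ (fun z => Real.sqrt (HSGaux.g N b ε z)) y (EuclideanSpace.single N 1))
        =ᶠ[nhds x] (fun y => b / ε * (y N / ε) ^ (b - 1)
            * (2 * Real.sqrt (HSGaux.g N b ε y))⁻¹) := by
    filter_upwards [hU.mem_nhds hxU] with y hy
    rw [hpd y hy.1 hy.2 N, if_pos rfl, div_eq_mul_inv]
    ring
  have hpd2off : ∀ i j : Fin n, j ≠ N →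
      pd2 (fun y => Real.sqrt (HSGaux.g N b ε y)) i j x
        = x j * (if i = N then b * (x N / ε) ^ (b - 1) / ε else -(2 * x i))
              / (2 * Real.sqrt (HSGaux.g N b ε x) ^ 3)
          - (if j = i then 1 else 0) / Real.sqrt (HSGaux.g N b ε x) := by
    intro i j hj
    simp only [pd2]
    rw [(hev_off j hj).fderiv_eq]
    exact HSGaux.fderiv_c_off N b ε x hxε hgx i j
  have hpd2N : ∀ i : Fin n,
      pd2 (fun y => Real.sqrt (HSGaux.g N b ε y)) i N x
        = -((b * (x N / ε) ^ (b - 1) / ε)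
              * (if i = N then b * (x N / ε) ^ (b - 1) / ε else -(2 * x i)))
              / (4 * Real.sqrt (HSGaux.g N b ε x) ^ 3)
          + (if N = i then b * (b - 1) * (x N / ε) ^ (b - 2) / ε ^ 2 else 0)
              / (2 * Real.sqrt (HSGaux.g N b ε x)) := by
    intro i
    simp only [pd2]
    rw [hev_N.fderiv_eq]
    exact HSGaux.fderiv_c_N N b ε x hxε hgx i
  -- abbreviations
  set w := Real.sqrt (HSGaux.g N b ε x) with hwdef
  set p := b * (x N / ε) ^ (b - 1) / ε with hpdef
  set q := b * (b - 1) * (x N / ε) ^ (b - 2) / ε ^ 2 with hqdef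
  set s := ∑ i ∈ Finset.univ.erase N, x i ^ 2 with hsdef
  have hw : 0 < w := hw0
  have hs0 : 0 ≤ s := Finset.sum_nonneg fun i _ => sq_nonneg _
  -- simplified second derivatives
  have hpd2_ij : ∀ i, i ≠ N → ∀ j, j ≠ N →
      pd2 (fun y => Real.sqrt (HSGaux.g N b ε y)) i j x
        = -(x i * x j) / w ^ 3 - (if j = i then 1 else 0) / w := by
    intro i hi j hj
    rw [hpd2off i j hj, if_neg hi]
    rcases eq_or_ne j i with rfl | hji
    · try simp only [if_pos rfl]
      field_simp
    · try simp only [if_neg hji]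
      field_simp
  have hpd2_iN : ∀ i, i ≠ N →
      pd2 (fun y => Real.sqrt (HSGaux.g N b ε y)) i N x = x i * p / (2 * w ^ 3) := by
    intro i hi
    rw [hpd2N i, if_neg hi, if_neg (fun h => hi h.symm)]
    field_simp
    ring
  have hpd2_Nj : ∀ j, j ≠ N →
      pd2 (fun y => Real.sqrt (HSGaux.g N b ε y)) N j x = x j * p / (2 * w ^ 3) := by
    intro j hj
    rw [hpd2off N j hj, if_pos rfl, if_neg hj, zero_div, sub_zero]
  have hpd2_NN : pd2 (fun y => Real.sqrt (HSGaux.g N b ε y)) N N x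
      = q / (2 * w) - p ^ 2 / (4 * w ^ 3) := by
    rw [hpd2N N, if_pos rfl, if_pos rfl]
    field_simp
    ring
  have hcard : ((Finset.univ.erase N).card : ℝ) = (n : ℝ) - 1 := by
    rw [Finset.card_erase_of_mem (Finset.mem_univ N), Finset.card_univ, Fintype.card_fin,
      Nat.cast_sub (by omega : 1 ≤ n), Nat.cast_one]
  -- the three sums
  have hS2 : ∑ i, pd2 (fun y => Real.sqrt (HSGaux.g N b ε y)) i i x
      = -(1 / w ^ 3) * s + ((n:ℝ) - 1) * -(1 / w) + (q / (2 * w) - p ^ 2 / (4 * w ^ 3)) := by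
    have hfun : ∀ i ∈ Finset.univ.erase N,
        pd2 (fun y => Real.sqrt (HSGaux.g N b ε y)) i i x = -(1 / w ^ 3) * x i ^ 2 + -(1 / w) := by
      intro i hi
      have hi' : i ≠ N := (Finset.mem_erase.mp hi).1
      rw [hpd2_ij i hi' i hi', if_pos rfl]
      field_simp
      ring
    rw [← Finset.sum_erase_add _ _ (Finset.mem_univ N), hpd2_NN,
      HSGaux.sum_helper N x _ (-(1 / w ^ 3)) (-(1 / w)) hfun, hcard, ← hsdef]
  have hS1 : ∑ i, pd (fun y => Real.sqrt (HSGaux.g N b ε y)) i x ^ 2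
      = 1 / w ^ 2 * s + ((n:ℝ) - 1) * 0 + (p / (2 * w)) ^ 2 := by
    have hfun : ∀ i ∈ Finset.univ.erase N,
        pd (fun y => Real.sqrt (HSGaux.g N b ε y)) i x ^ 2 = 1 / w ^ 2 * x i ^ 2 + 0 := by
      intro i hi
      rw [hpdoff i (Finset.mem_erase.mp hi).1]
      field_simp
      ring
    rw [← Finset.sum_erase_add _ _ (Finset.mem_univ N), hpdN,
      HSGaux.sum_helper N x _ (1 / w ^ 2) 0 hfun, hcard, ← hsdef]
  have hKinner : ∀ i ∈ Finset.univ.erase N,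
      (∑ j, pd (fun y => Real.sqrt (HSGaux.g N b ε y)) i x
          * pd (fun y => Real.sqrt (HSGaux.g N b ε y)) j x
          * pd2 (fun y => Real.sqrt (HSGaux.g N b ε y)) i j x)
        = (-(s / w ^ 5) - 1 / w ^ 3 - p ^ 2 / (4 * w ^ 5)) * x i ^ 2 + 0 := by
    intro i hi
    have hi' : i ≠ N := (Finset.mem_erase.mp hi).1
    have hfun : ∀ j ∈ Finset.univ.erase N,
        pd (fun y => Real.sqrt (HSGaux.g N b ε y)) i x
          * pd (fun y => Real.sqrt (HSGaux.g N b ε y)) j x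
          * pd2 (fun y => Real.sqrt (HSGaux.g N b ε y)) i j x
          = -(x i ^ 2) / w ^ 5 * x j ^ 2 + (if j = i then -(x i ^ 2) / w ^ 3 else 0) := by
      intro j hj
      have hj' : j ≠ N := (Finset.mem_erase.mp hj).1
      rw [hpdoff i hi', hpdoff j hj', hpd2_ij i hi' j hj']
      rcases eq_or_ne j i with rfl | hji
      · try simp only [if_pos rfl]
        simp only [↓reduceIte]
        field_simp
        ring
      · try simp only [if_neg hji]
        field_simp
        ring
    rw [← Finset.sum_erase_add _ _ (Finset.mem_univ N),
      HSGaux.sum_helper_delta N i hi x _ (-(x i ^ 2) / w ^ 5) (-(x i ^ 2) / w ^ 3) hfun,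
      ← hsdef, hpd2_iN i hi', hpdN, hpdoff i hi']
    field_simp
    ring
  have hNinner : (∑ j, pd (fun y => Real.sqrt (HSGaux.g N b ε y)) N x
        * pd (fun y => Real.sqrt (HSGaux.g N b ε y)) j x
        * pd2 (fun y => Real.sqrt (HSGaux.g N b ε y)) N j x)
      = -(p ^ 2 * s) / (4 * w ^ 5) + p ^ 2 * q / (8 * w ^ 3) - p ^ 4 / (16 * w ^ 5) := by
    have hfun : ∀ j ∈ Finset.univ.erase N,
        pd (fun y => Real.sqrt (HSGaux.g N b ε y)) N x
          * pd (fun y => Real.sqrt (HSGaux.g N b ε y)) j x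
          * pd2 (fun y => Real.sqrt (HSGaux.g N b ε y)) N j x
          = -(p ^ 2 / (4 * w ^ 5)) * x j ^ 2 + 0 := by
      intro j hj
      have hj' : j ≠ N := (Finset.mem_erase.mp hj).1
      rw [hpdN, hpdoff j hj', hpd2_Nj j hj']
      field_simp
      ring
    rw [← Finset.sum_erase_add _ _ (Finset.mem_univ N),
      HSGaux.sum_helper N x _ (-(p ^ 2 / (4 * w ^ 5))) 0 hfun, hcard, ← hsdef,
      hpdN, hpd2_NN]
    field_simp
    ring
  have hDS : ∑ i, ∑ j, pd (fun y => Real.sqrt (HSGaux.g N b ε y)) i x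
        * pd (fun y => Real.sqrt (HSGaux.g N b ε y)) j x
        * pd2 (fun y => Real.sqrt (HSGaux.g N b ε y)) i j x
      = (-(s / w ^ 5) - 1 / w ^ 3 - p ^ 2 / (4 * w ^ 5)) * s + ((n:ℝ) - 1) * 0
        + (-(p ^ 2 * s) / (4 * w ^ 5) + p ^ 2 * q / (8 * w ^ 3) - p ^ 4 / (16 * w ^ 5)) := by
    rw [← Finset.sum_erase_add _ _ (Finset.mem_univ N),
      HSGaux.sum_helper N x _ (-(s / w ^ 5) - 1 / w ^ 3 - p ^ 2 / (4 * w ^ 5)) 0 hKinner,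
      hcard, ← hsdef, hNinner]
  -- the key inequality q ≤ -2
  have hq2 : q ≤ -2 := by
    rw [hqdef]
    have h1 : (x N / ε) ^ (b - 2) = x N ^ (b - 2) / ε ^ (b - 2) :=
      Real.div_rpow ht.le hε.le (b - 2)
    have h2 : ε ^ (b - 2) * ε ^ (2:ℕ) = ε ^ b := by
      rw [← Real.rpow_natCast ε 2, ← Real.rpow_add hε]
      norm_num
    have h3 : (1 / ε) ^ b = (ε ^ b)⁻¹ := by
      rw [one_div, Real.inv_rpow hε.le]
    have hba : (2 - a) / a ^ 2 = b * (b - 1) / 2 := by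
      rw [hbdef]
      field_simp
    rw [hba, h3] at hsmall
    have hdt : d ^ (b - 2) ≤ x N ^ (b - 2) :=
      Real.rpow_le_rpow_of_nonpos ht htd (by linarith)
    have hεb : (0:ℝ) < ε ^ b := Real.rpow_pos_of_pos hε b
    have hεb2 : (0:ℝ) < ε ^ (b - 2) := Real.rpow_pos_of_pos hε _
    have hq_eq : b * (b - 1) * (x N / ε) ^ (b - 2) / ε ^ 2
        = b * (b - 1) * x N ^ (b - 2) * (ε ^ b)⁻¹ := by
      rw [h1, ← h2]
      field_simp
    rw [hq_eq]
    have hmono : b * (b - 1) * x N ^ (b - 2) ≤ b * (b - 1) * d ^ (b - 2) :=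
      mul_le_mul_of_nonpos_left hdt (by nlinarith)
    have hfin : b * (b - 1) * x N ^ (b - 2) * (ε ^ b)⁻¹
        ≤ b * (b - 1) * d ^ (b - 2) * (ε ^ b)⁻¹ :=
      mul_le_mul_of_nonneg_right hmono (by positivity)
    nlinarith [hfin, hsmall]
  -- assemble
  unfold FHMG
  rw [hS2, hS1, hDS]
  rw [show (fun y => Real.sqrt (HSGaux.g N b ε y)) x = w from rfl]
  have hden : (0:ℝ) < 1 + (1 / w ^ 2 * s + ((n:ℝ) - 1) * 0 + (p / (2 * w)) ^ 2) := by
    have h1 : 0 ≤ 1 / w ^ 2 * s := mul_nonneg (by positivity) hs0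
    nlinarith [sq_nonneg (p / (2 * w)), h1]
  have hE : -(1 / w ^ 3) * s + ((n:ℝ) - 1) * -(1 / w) + (q / (2 * w) - p ^ 2 / (4 * w ^ 3))
      - ((-(s / w ^ 5) - 1 / w ^ 3 - p ^ 2 / (4 * w ^ 5)) * s + ((n:ℝ) - 1) * 0
        + (-(p ^ 2 * s) / (4 * w ^ 5) + p ^ 2 * q / (8 * w ^ 3) - p ^ 4 / (16 * w ^ 5)))
        / (1 + (1 / w ^ 2 * s + ((n:ℝ) - 1) * 0 + (p / (2 * w)) ^ 2))
      + (n:ℝ) / w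
      = 2 * (w ^ 2 + s) * (2 + q) / (w * (4 * (w ^ 2 + s) + p ^ 2)) := by
    have h4 : (0:ℝ) < 4 * (w ^ 2 + s) + p ^ 2 := by
      nlinarith [pow_pos hw 2, hs0, sq_nonneg p]
    have h5 : (1 + (1 / w ^ 2 * s + ((n:ℝ) - 1) * 0 + (p / (2 * w)) ^ 2)) = (4 * (w ^ 2 + s) + p ^ 2) / (4 * w ^ 2) := by
      field_simp
      ring
    rw [h5]
    field_simp
    ring
  rw [hE]
  apply div_nonpos_of_nonpos_of_nonneg
  · nlinarith [sq_nonneg w, hs0, hq2, hw]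
  · apply mul_nonneg hw.le
    nlinarith [pow_pos hw 2, hs0, sq_nonneg p]
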